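/- arXiv:1612.06067 — 3 statements merged into one kernel-verified Lean document; each statement's English description precedes it below -/
import Mathlib

section
/- Fix vectors $\beta_1,\dots,\beta_k \in \mathbb{R}^d$ and a partition $S_1,\dots,S_k$ of $\{1,\dots,m\}$ with $n_p = |S_p|$, and measurements $(a_i, b_i)$ with $a_i^\top \beta_p = b_i$ for $i \in S_p$. Let $\ell_i$ denote the class of index $i$, and let $z_i^\sharp = \beta_{\ell_i}$. Suppose that for each $p$ and each $i,j \in S_p$ with $i \neq j$ there exist $\xi_{ij} \in \mathbb{R}^d$ with $\|\xi_{ij}\|_2 < 1$, $\xi_{ij} = -\xi_{ji}$, and scalars $\nu_i \in \mathbb{R}$ such that $\nu_i a_i = \sum_{j \in S_p, j \neq i} \xi_{ij} + \sum_{q \neq p} n_q v_{pq}$, where $v_{pq} = (\beta_p - \beta_q)/\|\beta_p - \beta_q\|_2$. Suppose further that for each $p$, $\mathrm{span}\{a_i : i \in S_p\} = \mathbb{R}^d$. Then $(z_1^\sharp,\dots,z_m^\sharp)$ is the unique minimizer of $f(z_1,\dots,z_m) = \sum_{i=1}^m \sum_{j=1}^m \|z_i - z_j\|_2$ subject to $a_i^\top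 z_i = b_i$ for all $i$. -/
/-!
For a feasible `z`, write `z i = β (ℓ i) + h i` with `⟪a i, h i⟫ = 0`. Attach to every pair
`(i, j)` a subgradient `g i j` of the norm at `β (ℓ i) - β (ℓ j)` (the `ξ i j` inside a class,
the unit vector `v_pq` across classes). Summing the subgradient inequalities
`‖z i - z j‖ ≥ ‖β (ℓ i) - β (ℓ j)‖ + ⟪g i j, h i - h j⟫`, the correction terms collapse by
antisymmetry of `g` to `2 ∑ i, ν i ⟪a i, h i⟫ = 0`. Since `‖ξ i j‖ < 1`, equality forces `h` to be
constant on each class, so `h i` is orthogonal to all `a j` of its class, which span the space: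
hence `h = 0`.
-/

open scoped InnerProductSpace
open Finset

section SubgradientOfNorm

variable {E : Type*} [NormedAddCommGroup E] [InnerProductSpace ℝ E]

theorem norm_add_inner_le_norm_add {g u : E} (hg : ‖g‖ ≤ 1) (hgu : ⟪g, u⟫_ℝ = ‖u‖) (w : E) :
    ‖u‖ + ⟪g, w⟫_ℝ ≤ ‖u + w‖ :=
  calc ‖u‖ + ⟪g, w⟫_ℝ = ⟪g, u + w⟫_ℝ := by rw [inner_add_right, hgu]
    _ ≤ ‖g‖ * ‖u + w‖ := real_inner_le_norm _ _
    _ ≤ ‖u + w‖ := mul_le_of_le_one_left (norm_nonneg _) hg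

theorem norm_add_inner_lt_norm_add {g u w : E} (hg : ‖g‖ < 1) (hgu : ⟪g, u⟫_ℝ = ‖u‖)
    (hw : w ≠ 0) : ‖u‖ + ⟪g, w⟫_ℝ < ‖u + w‖ := by
  have hu : u = 0 := by
    by_contra hu
    linarith [real_inner_le_norm g u, mul_lt_of_lt_one_left (norm_pos_iff.2 hu) hg]
  subst hu
  calc ‖(0 : E)‖ + ⟪g, w⟫_ℝ ≤ ‖g‖ * ‖w‖ := by simpa using real_inner_le_norm g w
    _ < ‖0 + w‖ := by simpa using mul_lt_of_lt_one_left (norm_pos_iff.2 hw) hg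

theorem norm_inv_norm_smul_le_one (u : E) : ‖‖u‖⁻¹ • u‖ ≤ 1 := by
  rcases eq_or_ne u 0 with rfl | hu
  · simp
  · rw [norm_smul, norm_inv, norm_norm, inv_mul_cancel₀ (norm_ne_zero_iff.2 hu)]

theorem real_inner_inv_norm_smul_self (u : E) : ⟪‖u‖⁻¹ • u, u⟫_ℝ = ‖u‖ := by
  rw [real_inner_smul_left, real_inner_self_eq_norm_sq]
  rcases eq_or_ne ‖u‖ 0 with hu | hu
  · simp [hu]
  · field_simp

end SubgradientOfNorm

theorem Submodule.eq_zero_of_forall_inner_eq_zero_of_span_eq_top {E : Type*}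
    [NormedAddCommGroup E] [InnerProductSpace ℝ E] {s : Set E}
    (hs : Submodule.span ℝ s = ⊤) {v : E} (hv : ∀ u ∈ s, ⟪u, v⟫_ℝ = 0) : v = 0 := by
  have hle : Submodule.span ℝ s ≤ (ℝ ∙ v)ᗮ := Submodule.span_le.2 fun u hu =>
    Submodule.mem_orthogonal_singleton_iff_inner_left.2 (hv u hu)
  have hvv : v ∈ (ℝ ∙ v)ᗮ := hle (hs ▸ Submodule.mem_top)
  exact inner_self_eq_zero.1 (Submodule.mem_orthogonal_singleton_iff_inner_left.1 hvv)

theorem Finset.sum_filter_ne_comp_eq_sum_card_smul {ι κ M : Type*} [Fintype ι] [Fintype κ]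
    [DecidableEq κ] [AddCommMonoid M] (ℓ : ι → κ) (F : κ → M) (p : κ) :
    ∑ j with ℓ j ≠ p, F (ℓ j) = ∑ q ∈ univ.erase p, #{j | ℓ j = q} • F q := by
  rw [← sum_fiberwise_of_maps_to (g := ℓ) (t := univ.erase p) (by simp)]
  refine sum_congr rfl fun q hq => ?_
  have hfiber : univ.filter (fun j => ℓ j ≠ p ∧ ℓ j = q) = univ.filter (fun j => ℓ j = q) :=
    filter_congr fun j _ => and_iff_right_of_imp fun hj => by rw [hj]; exact ne_of_mem_erase hq
  rw [filter_filter, hfiber, sum_congr rfl fun j hj => congrArg F (mem_filter.1 hj).2, sum_const]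

section Certificate

variable {ι E : Type*} [Fintype ι] [DecidableEq ι] [NormedAddCommGroup E] [InnerProductSpace ℝ E]

theorem sum_sub_swap_eq_two_smul_sum_erase {M : Type*} [AddCommGroup M] [Module ℝ M]
    {g : ι → ι → M} (hanti : ∀ i j, i ≠ j → g j i = -g i j) (i : ι) :
    ∑ j, (g i j - g j i) = (2 : ℝ) • ∑ j ∈ univ.erase i, g i j := by
  rw [← add_sum_erase _ _ (mem_univ i), sub_self, zero_add, two_smul, ← sum_add_distrib]
  refine sum_congr rfl fun j hj => ?_
  rw [hanti i j (ne_of_mem_erase hj).symm, sub_neg_eq_add]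

theorem sum_sum_inner_sub_eq_zero {g : ι → ι → E} {h : ι → E}
    (hanti : ∀ i j, i ≠ j → g j i = -g i j)
    (hrow : ∀ i, ⟪∑ j ∈ univ.erase i, g i j, h i⟫_ℝ = 0) :
    ∑ i, ∑ j, ⟪g i j, h i - h j⟫_ℝ = 0 := by
  calc ∑ i, ∑ j, ⟪g i j, h i - h j⟫_ℝ = ∑ i, ⟪∑ j, (g i j - g j i), h i⟫_ℝ := by
        simp only [inner_sub_right, inner_sub_left, sum_inner, sum_sub_distrib]
        rw [sum_comm (f := fun i j => ⟪g i j, h j⟫_ℝ)]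
    _ = 0 := by
        simp only [sum_sub_swap_eq_two_smul_sum_erase hanti, real_inner_smul_left, hrow, mul_zero,
          sum_const_zero]

theorem sum_norm_sub_lt_of_certificate {z₀ z a : ι → E} {g : ι → ι → E} {ν : ι → ℝ}
    (hg : ∀ i j, i ≠ j → ‖g i j‖ ≤ 1)
    (hgz₀ : ∀ i j, ⟪g i j, z₀ i - z₀ j⟫_ℝ = ‖z₀ i - z₀ j‖)
    (hanti : ∀ i j, i ≠ j → g j i = -g i j)
    (hrow : ∀ i, ∑ j ∈ univ.erase i, g i j = ν i • a i)
    (hz : ∀ i, ⟪a i, z i⟫_ℝ = ⟪a i, z₀ i⟫_ℝ)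
    (hstrict : ∃ i j, i ≠ j ∧ ‖g i j‖ < 1 ∧ z i - z j ≠ z₀ i - z₀ j) :
    ∑ i, ∑ j, ‖z₀ i - z₀ j‖ < ∑ i, ∑ j, ‖z i - z j‖ := by
  set h : ι → E := fun i => z i - z₀ i
  have hsplit : ∀ i j, z i - z j = (z₀ i - z₀ j) + (h i - h j) := fun i j => by
    simp only [h]; abel
  have hle : ∀ i j, ‖z₀ i - z₀ j‖ + ⟪g i j, h i - h j⟫_ℝ ≤ ‖z i - z j‖ := by
    intro i j
    rcases eq_or_ne i j with rfl | hij
    · simp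
    · rw [hsplit]; exact norm_add_inner_le_norm_add (hg i j hij) (hgz₀ i j) _
  obtain ⟨i₀, j₀, -, hg₀, hz₀⟩ := hstrict
  have hlt : ‖z₀ i₀ - z₀ j₀‖ + ⟪g i₀ j₀, h i₀ - h j₀⟫_ℝ < ‖z i₀ - z j₀‖ := by
    rw [hsplit]
    exact norm_add_inner_lt_norm_add hg₀ (hgz₀ i₀ j₀) fun hw => hz₀ (by rw [hsplit, hw, add_zero])
  have hzero : ∑ i, ∑ j, ⟪g i j, h i - h j⟫_ℝ = 0 :=
    sum_sum_inner_sub_eq_zero hanti fun i => by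
      rw [hrow, real_inner_smul_left, inner_sub_right, hz, sub_self, mul_zero]
  calc ∑ i, ∑ j, ‖z₀ i - z₀ j‖ = ∑ i, ∑ j, (‖z₀ i - z₀ j‖ + ⟪g i j, h i - h j⟫_ℝ) := by
        simp only [sum_add_distrib, hzero, add_zero]
    _ < ∑ i, ∑ j, ‖z i - z j‖ :=
      sum_lt_sum (fun i _ => sum_le_sum fun j _ => hle i j)
        ⟨i₀, mem_univ _, sum_lt_sum (fun j _ => hle i₀ j) ⟨j₀, mem_univ _, hlt⟩⟩

end Certificate

section MixedRegression

variable {ι κ E : Type*} [DecidableEq κ] [NormedAddCommGroup E] [InnerProductSpace ℝ E]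

noncomputable def pairSubgradient (β : κ → E) (ℓ : ι → κ) (ξ : ι → ι → E) (i j : ι) : E :=
  if ℓ j = ℓ i then ξ i j else ‖β (ℓ i) - β (ℓ j)‖⁻¹ • (β (ℓ i) - β (ℓ j))

variable {β : κ → E} {ℓ : ι → κ} {ξ : ι → ι → E}

theorem pairSubgradient_of_eq {i j : ι} (hij : ℓ j = ℓ i) : pairSubgradient β ℓ ξ i j = ξ i j :=
  if_pos hij

theorem pairSubgradient_of_ne {i j : ι} (hij : ℓ j ≠ ℓ i) :
    pairSubgradient β ℓ ξ i j = ‖β (ℓ i) - β (ℓ j)‖⁻¹ • (β (ℓ i) - β (ℓ j)) :=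
  if_neg hij

theorem norm_pairSubgradient_le_one (hξ : ∀ i j, ℓ i = ℓ j → i ≠ j → ‖ξ i j‖ < 1) {i j : ι}
    (hij : i ≠ j) : ‖pairSubgradient β ℓ ξ i j‖ ≤ 1 := by
  by_cases hc : ℓ j = ℓ i
  · rw [pairSubgradient_of_eq hc]; exact (hξ i j hc.symm hij).le
  · rw [pairSubgradient_of_ne hc]; exact norm_inv_norm_smul_le_one _

theorem inner_pairSubgradient (i j : ι) :
    ⟪pairSubgradient β ℓ ξ i j, β (ℓ i) - β (ℓ j)⟫_ℝ = ‖β (ℓ i) - β (ℓ j)‖ := by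
  by_cases hc : ℓ j = ℓ i
  · simp [hc]
  · rw [pairSubgradient_of_ne hc, real_inner_inv_norm_smul_self]

theorem pairSubgradient_swap (hξ : ∀ i j, ℓ i = ℓ j → i ≠ j → ξ i j = -ξ j i) {i j : ι}
    (hij : i ≠ j) : pairSubgradient β ℓ ξ j i = -pairSubgradient β ℓ ξ i j := by
  by_cases hc : ℓ j = ℓ i
  · rw [pairSubgradient_of_eq hc.symm, pairSubgradient_of_eq hc, hξ j i hc hij.symm]
  · rw [pairSubgradient_of_ne (Ne.symm hc), pairSubgradient_of_ne hc, norm_sub_rev,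
      ← smul_neg, neg_sub]

theorem sum_erase_pairSubgradient [Fintype ι] [DecidableEq ι] [Fintype κ] (i : ι) :
    ∑ j ∈ univ.erase i, pairSubgradient β ℓ ξ i j =
      (∑ j ∈ (univ.filter fun j => ℓ j = ℓ i).erase i, ξ i j) +
        ∑ q ∈ univ.erase (ℓ i), ((univ.filter fun j => ℓ j = q).card : ℝ) •
          (‖β (ℓ i) - β q‖⁻¹ • (β (ℓ i) - β q)) := by
  rw [← sum_filter_add_sum_filter_not _ (fun j => ℓ j = ℓ i), filter_erase]
  congr 1
  · exact sum_congr rfl fun j hj => pairSubgradient_of_eq (mem_filter.1 (mem_of_mem_erase hj)).2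
  · rw [filter_erase, erase_eq_of_notMem (by simp),
      sum_congr rfl fun j hj => pairSubgradient_of_ne (mem_filter.1 hj).2,
      sum_filter_ne_comp_eq_sum_card_smul ℓ (fun q => ‖β (ℓ i) - β q‖⁻¹ • (β (ℓ i) - β q))]
    simp only [Nat.cast_smul_eq_nsmul]

end MixedRegression

theorem eq_of_inner_eq_of_span_eq_top {ι κ E : Type*} [NormedAddCommGroup E]
    [InnerProductSpace ℝ E] {β : κ → E} {ℓ : ι → κ} {a z : ι → E}
    (hspan : ∀ p, Submodule.span ℝ {x | ∃ i, ℓ i = p ∧ a i = x} = ⊤)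
    (hz : ∀ i, ⟪a i, z i⟫_ℝ = ⟪a i, β (ℓ i)⟫_ℝ) (hzℓ : ∀ i j, ℓ i = ℓ j → z i = z j) :
    z = fun i => β (ℓ i) := by
  funext i
  rw [← sub_eq_zero]
  refine Submodule.eq_zero_of_forall_inner_eq_zero_of_span_eq_top (hspan (ℓ i)) ?_
  rintro _ ⟨j, hj, rfl⟩
  rw [hzℓ i j hj.symm, ← hj, inner_sub_right, hz, sub_self]

theorem stmt_3_general {d k m : ℕ}
    (β : Fin k → EuclideanSpace ℝ (Fin d))
    (ℓ : Fin m → Fin k)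
    (n : Fin k → ℕ) (hn : ∀ p, n p = (Finset.univ.filter fun i => ℓ i = p).card)
    (a : Fin m → EuclideanSpace ℝ (Fin d)) (b : Fin m → ℝ)
    (hb : ∀ i, b i = ⟪a i, β (ℓ i)⟫_ℝ)
    (ξ : Fin m → Fin m → EuclideanSpace ℝ (Fin d)) (ν : Fin m → ℝ)
    (hnorm : ∀ i j, ℓ i = ℓ j → i ≠ j → ‖ξ i j‖ < 1)
    (hanti : ∀ i j, ℓ i = ℓ j → i ≠ j → ξ i j = -ξ j i)
    (hstat : ∀ i, ν i • a i =
      (∑ j ∈ (Finset.univ.filter fun j => ℓ j = ℓ i).erase i, ξ i j) +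
        ∑ q ∈ Finset.univ.erase (ℓ i),
          (n q : ℝ) • (‖β (ℓ i) - β q‖⁻¹ • (β (ℓ i) - β q)))
    (hspan : ∀ p : Fin k,
      Submodule.span ℝ {x | ∃ i, ℓ i = p ∧ a i = x} = ⊤) :
    ∀ z : Fin m → EuclideanSpace ℝ (Fin d),
      (∀ i, ⟪a i, z i⟫_ℝ = b i) → z ≠ (fun i => β (ℓ i)) →
        ∑ i : Fin m, ∑ j : Fin m, ‖β (ℓ i) - β (ℓ j)‖ <
          ∑ i : Fin m, ∑ j : Fin m, ‖z i - z j‖ := by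
  intro z hz hne
  refine sum_norm_sub_lt_of_certificate (g := pairSubgradient β ℓ ξ) (a := a) (ν := ν)
    (fun i j => norm_pairSubgradient_le_one hnorm) inner_pairSubgradient
    (fun i j => pairSubgradient_swap hanti)
    (fun i => by rw [sum_erase_pairSubgradient, hstat i]; simp only [hn])
    (fun i => by rw [hz, hb]) ?_
  by_contra! hcon
  refine hne (eq_of_inner_eq_of_span_eq_top hspan (fun i => by rw [hz, hb]) fun i j hij => ?_)
  rcases eq_or_ne i j with rfl | hij'
  · rfl
  · have hlt : ‖pairSubgradient β ℓ ξ i j‖ < 1 := by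
      rw [pairSubgradient_of_eq hij.symm]; exact hnorm i j hij hij'
    simpa [hij, sub_eq_zero] using hcon i j hij' hlt

theorem stmt_3 {d k m : ℕ}
    (β : Fin k → EuclideanSpace ℝ (Fin d)) (hβ : Function.Injective β)
    (ℓ : Fin m → Fin k)
    (n : Fin k → ℕ) (hn : ∀ p, n p = (Finset.univ.filter fun i => ℓ i = p).card)
    (a : Fin m → EuclideanSpace ℝ (Fin d)) (b : Fin m → ℝ)
    (hb : ∀ i, b i = ⟪a i, β (ℓ i)⟫_ℝ)
    (ξ : Fin m → Fin m → EuclideanSpace ℝ (Fin d)) (ν : Fin m → ℝ)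
    (hnorm : ∀ i j, ℓ i = ℓ j → i ≠ j → ‖ξ i j‖ < 1)
    (hanti : ∀ i j, ℓ i = ℓ j → i ≠ j → ξ i j = -ξ j i)
    (hstat : ∀ i, ν i • a i =
      (∑ j ∈ (Finset.univ.filter fun j => ℓ j = ℓ i).erase i, ξ i j) +
        ∑ q ∈ Finset.univ.erase (ℓ i),
          (n q : ℝ) • (‖β (ℓ i) - β q‖⁻¹ • (β (ℓ i) - β q)))
    (hspan : ∀ p : Fin k,
      Submodule.span ℝ {x | ∃ i, ℓ i = p ∧ a i = x} = ⊤) :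
    ∀ z : Fin m → EuclideanSpace ℝ (Fin d),
      (∀ i, ⟪a i, z i⟫_ℝ = b i) → z ≠ (fun i => β (ℓ i)) →
        ∑ i : Fin m, ∑ j : Fin m, ‖β (ℓ i) - β (ℓ j)‖ <
          ∑ i : Fin m, ∑ j : Fin m, ‖z i - z j‖ :=
  stmt_3_general β ℓ n hn a b hb ξ ν hnorm hanti hstat hspan
end

section
/- Fix $p$ and a finite set $S_p$ with $|S_p| = n_p$, a nonzero $v_p \in \mathbb{R}^d$, a positive constant $N = \sum_{q \neq p} n_q$, and vectors $a_i \in \mathbb{R}^d$ for $i \in S_p$ with $v_p^\top a_i \neq 0$. Define $\nu_i = \mathrm{sign}(v_p^\top a_i)\, N\, \|v_p\|_2 / \|P_{v_p} a_i\|_2$ and $\xi_{ij} = \frac{1}{n_p}(\nu_i P_{v_p^\perp} a_i - \nu_j P_{v_p^\perp} a_j)$. If the balance condition $\sum_{i \in S_p} \mathrm{sign}(v_p^\top a_i) \frac{P_{v_p^\perp} a_i}{\|P_{v_p} a_i\|_2} = 0$ holds, then for every $i \in S_p$: $\sum_{j \in S_p, j \neq i} \xi_{ij} + N v_p = \nu_i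 a_i$. -/
open scoped InnerProductSpace

/-!
Write `P a = (⟪v, a⟫ / ‖v‖²) • v` for the projection onto `ℝ ∙ v`, so `‖P a‖ = |⟪v, a⟫| / ‖v‖`.
The normalisation of `νᵢ` is exactly what makes `νᵢ • P aᵢ = N • v`, so it remains to show
`∑_{j ≠ i} ξᵢⱼ = νᵢ • (aᵢ - P aᵢ)`. With `wⱼ = νⱼ • (aⱼ - P aⱼ)` the balance condition says
`∑ⱼ wⱼ = 0` (after scaling by `N ‖v‖`), and then `∑_{j ≠ i} (wᵢ - wⱼ) / nₚ = (nₚ wᵢ - ∑ⱼ wⱼ) / nₚ = wᵢ`.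
-/

theorem Real.sign_mul_self (r : ℝ) : Real.sign r * r = |r| := by
  rcases lt_trichotomy r 0 with h | rfl | h
  · rw [Real.sign_of_neg h, abs_of_neg h, neg_one_mul]
  · simp
  · rw [Real.sign_of_pos h, abs_of_pos h, one_mul]

theorem Finset.sum_erase_inv_card_smul_sub {K M ι : Type*} [Field K] [CharZero K]
    [AddCommGroup M] [Module K M] [DecidableEq ι] {S : Finset ι} {w : ι → M}
    (hw : ∑ j ∈ S, w j = 0) {i : ι} (hi : i ∈ S) :
    ∑ j ∈ S.erase i, (S.card : K)⁻¹ • (w i - w j) = w i := by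
  have hcard : (S.card : K) ≠ 0 := Nat.cast_ne_zero.mpr (Finset.card_ne_zero_of_mem hi)
  rw [← Finset.smul_sum, Finset.sum_erase S (f := fun j => w i - w j) (sub_self _), Finset.sum_sub_distrib, hw,
    sub_zero, Finset.sum_const, ← Nat.cast_smul_eq_nsmul K, smul_smul, inv_mul_cancel₀ hcard,
    one_smul]

section Projection

variable {E : Type*} [NormedAddCommGroup E] [InnerProductSpace ℝ E]

theorem norm_inner_div_norm_sq_smul (v a : E) :
    ‖(⟪v, a⟫_ℝ / ‖v‖ ^ 2) • v‖ = |⟪v, a⟫_ℝ| / ‖v‖ := by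
  rcases eq_or_ne v 0 with rfl | hv
  · simp
  rw [norm_smul, Real.norm_eq_abs, abs_div, abs_pow, abs_norm]
  field_simp [norm_ne_zero_iff.mpr hv]

theorem sign_mul_div_norm_smul_inner_div_norm_sq_smul (N : ℝ) {v a : E} (ha : ⟪v, a⟫_ℝ ≠ 0) :
    (Real.sign ⟪v, a⟫_ℝ * N * ‖v‖ / ‖(⟪v, a⟫_ℝ / ‖v‖ ^ 2) • v‖) •
      (⟪v, a⟫_ℝ / ‖v‖ ^ 2) • v = N • v := by
  have hv : ‖v‖ ≠ 0 := norm_ne_zero_iff.mpr fun h => ha (by simp [h])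
  have habs : |⟪v, a⟫_ℝ| ≠ 0 := abs_ne_zero.mpr ha
  rw [smul_smul, norm_inner_div_norm_sq_smul]
  congr 1
  field_simp
  linear_combination N * Real.sign_mul_self ⟪v, a⟫_ℝ

end Projection

theorem stmt_11_general {d : ℕ} {ι : Type*} [DecidableEq ι] (S : Finset ι)
    (np : ℕ) (hnp : np = S.card)
    (N : ℝ)
    (v : EuclideanSpace ℝ (Fin d))
    (a : ι → EuclideanSpace ℝ (Fin d)) (ha : ∀ i ∈ S, ⟪v, a i⟫_ℝ ≠ 0)
    (ν : ι → ℝ)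
    (hν : ∀ i ∈ S, ν i =
      Real.sign ⟪v, a i⟫_ℝ * N * ‖v‖ / ‖(⟪v, a i⟫_ℝ / ‖v‖ ^ 2) • v‖)
    (ξ : ι → ι → EuclideanSpace ℝ (Fin d))
    (hξ : ∀ i ∈ S, ∀ j ∈ S, ξ i j =
      (np : ℝ)⁻¹ • (ν i • (a i - (⟪v, a i⟫_ℝ / ‖v‖ ^ 2) • v)
        - ν j • (a j - (⟪v, a j⟫_ℝ / ‖v‖ ^ 2) • v)))
    (hbal : ∑ i ∈ S, Real.sign ⟪v, a i⟫_ℝ •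
      (‖(⟪v, a i⟫_ℝ / ‖v‖ ^ 2) • v‖⁻¹ • (a i - (⟪v, a i⟫_ℝ / ‖v‖ ^ 2) • v)) = 0) :
    ∀ i ∈ S, ∑ j ∈ S.erase i, ξ i j + N • v = ν i • a i := by
  intro i hi
  set w : ι → EuclideanSpace ℝ (Fin d) := fun j => ν j • (a j - (⟪v, a j⟫_ℝ / ‖v‖ ^ 2) • v)
  have hw : ∑ j ∈ S, w j = 0 := by
    rw [← smul_zero (N * ‖v‖), ← hbal, Finset.smul_sum]
    refine Finset.sum_congr rfl fun j hj => ?_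
    simp only [w, hν j hj, smul_smul]
    congr 1
    ring
  have hξsum : ∑ j ∈ S.erase i, ξ i j = w i := by
    rw [← Finset.sum_erase_inv_card_smul_sub (K := ℝ) hw hi, ← hnp]
    exact Finset.sum_congr rfl fun j hj => hξ i hi j (Finset.mem_of_mem_erase hj)
  rw [hξsum, ← sign_mul_div_norm_smul_inner_div_norm_sq_smul N (ha i hi), ← hν i hi, ← smul_add,
    sub_add_cancel]

theorem stmt_11 {d : ℕ} {ι : Type*} [DecidableEq ι] (S : Finset ι)
    (np : ℕ) (hnp : np = S.card)
    (N : ℝ) (hN : 0 < N)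
    (v : EuclideanSpace ℝ (Fin d)) (hv : v ≠ 0)
    (a : ι → EuclideanSpace ℝ (Fin d)) (ha : ∀ i ∈ S, ⟪v, a i⟫_ℝ ≠ 0)
    (ν : ι → ℝ)
    (hν : ∀ i ∈ S, ν i =
      Real.sign ⟪v, a i⟫_ℝ * N * ‖v‖ / ‖(⟪v, a i⟫_ℝ / ‖v‖ ^ 2) • v‖)
    (ξ : ι → ι → EuclideanSpace ℝ (Fin d))
    (hξ : ∀ i ∈ S, ∀ j ∈ S, ξ i j =
      (np : ℝ)⁻¹ • (ν i • (a i - (⟪v, a i⟫_ℝ / ‖v‖ ^ 2) • v)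
        - ν j • (a j - (⟪v, a j⟫_ℝ / ‖v‖ ^ 2) • v)))
    (hbal : ∑ i ∈ S, Real.sign ⟪v, a i⟫_ℝ •
      (‖(⟪v, a i⟫_ℝ / ‖v‖ ^ 2) • v‖⁻¹ • (a i - (⟪v, a i⟫_ℝ / ‖v‖ ^ 2) • v)) = 0) :
    ∀ i ∈ S, ∑ j ∈ S.erase i, ξ i j + N • v = ν i • a i :=
  stmt_11_general S np hnp N v a ha ν hν ξ hξ hbal
end

section
/- Fix distinct vectors $\beta_1,\dots,\beta_k \in \mathbb{R}^d$, a partition $S_1,\dots,S_k$ of $\{1,\dots,m\}$ with sizes $n_p = |S_p|$, vectors $a_i \in \mathbb{R}^d$ and scalars $b_i = a_i^\top \beta_{\ell_i}$ where $\ell_i$ is the class of $i$. Define $v_{pq} = (\beta_p - \beta_q)/\|\beta_p-\beta_q\|_2$ and $v_p = (\sum_{q\neq p} n_q)^{-1} \sum_{q\neq p} n_q v_{pq}$, and assume $v_p \neq 0$ and $v_p^\top a_i \neq 0$ for $i \in S_p$. Assume: (i) well-separation: $\max_p \max_{i\in S_p} \|P_{v_p^\perp} a_i\|_2/\|P_{v_p}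 a_i\|_2 < \frac{1}{2}\min_p n_p/m$; (ii) balance: $\sum_{i\in S_p} \mathrm{sign}(v_p^\top a_i) P_{v_p^\perp} a_i / \|P_{v_p} a_i\|_2 = 0$ for every $p$; (iii) spanning: $\mathrm{span}\{a_i : i \in S_p\} = \mathbb{R}^d$ for every $p$. Then the unique minimizer of $\sum_{i,j=1}^m \|z_i - z_j\|_2$ over all $(z_1,\dots,z_m) \in (\mathbb{R}^d)^m$ with $a_i^\top z_i = b_i$ is given by $z_i = \beta_{\ell_i}$ for all $i$. -/
open scoped InnerProductSpace
open Finset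

/-!
The point `z i = β (ℓ i)` is certified by an antisymmetric family of vectors `G i j` of norm at
most one with `⟪G i j, β (ℓ i) - β (ℓ j)⟫ = ‖β (ℓ i) - β (ℓ j)‖` and row sums `∑ j, G i j`
parallel to `a i`: pairing it with `z - β ∘ ℓ` shows that no feasible `z` does better, and
strictly better as soon as `‖G i j‖ < 1` on a pair with `z i ≠ z j`.

Between classes `G i j` is the unit vector from `β (ℓ j)` to `β (ℓ i)`. Inside class `p` it is
`(λ i • a i - λ j • a j) / (2 n_p)`, where `λ i` is chosen so that the component of `λ i • a i`
along `v p` is `2 (m - n_p) • v p`. Balance makes the row sums equal to `λ i • a i / 2`,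
well-separation gives `‖G i j‖ < 1` inside classes, and spanning yields a pair in one class
that every feasible `z ≠ β ∘ ℓ` separates.
-/

section DualCertificate

variable {E ι : Type*} [NormedAddCommGroup E] [InnerProductSpace ℝ E] [Fintype ι]

theorem real_inner_le_norm_of_norm_le_one {g : E} (hg : ‖g‖ ≤ 1) (w : E) : ⟪g, w⟫_ℝ ≤ ‖w‖ :=
  (real_inner_le_norm g w).trans (mul_le_of_le_one_left (norm_nonneg w) hg)

theorem real_inner_lt_norm_of_norm_lt_one {g w : E} (hg : ‖g‖ < 1) (hw : w ≠ 0) :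
    ⟪g, w⟫_ℝ < ‖w‖ :=
  (real_inner_le_norm g w).trans_lt (mul_lt_of_lt_one_left (norm_pos_iff.mpr hw) hg)

theorem sum_sum_inner_sub_of_antisymm {G : ι → ι → E} (hG : ∀ i j, G j i = -G i j)
    (y : ι → E) : ∑ i, ∑ j, ⟪G i j, y i - y j⟫_ℝ = 2 * ∑ i, ⟪∑ j, G i j, y i⟫_ℝ := by
  have hswap : ∑ i, ∑ j, ⟪G i j, y j⟫_ℝ = -∑ i, ∑ j, ⟪G i j, y i⟫_ℝ := by
    rw [sum_comm, ← sum_neg_distrib]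
    refine sum_congr rfl fun j _ => ?_
    rw [← sum_neg_distrib]
    exact sum_congr rfl fun i _ => by rw [hG j i, inner_neg_left]
  simp only [inner_sub_right, sum_sub_distrib, hswap, sum_inner]
  ring

theorem sum_norm_sub_lt_of_dualCertificate {x z a : ι → E} {G : ι → ι → E}
    (hanti : ∀ i j, G j i = -G i j) (hnorm : ∀ i j, ‖G i j‖ ≤ 1)
    (hx : ∀ i j, ⟪G i j, x i - x j⟫_ℝ = ‖x i - x j‖) (hrow : ∀ i, ∃ μ : ℝ, ∑ j, G i j = μ • a i)
    (hz : ∀ i, ⟪a i, z i⟫_ℝ = ⟪a i, x i⟫_ℝ) {i₀ j₀ : ι} (hlt : ‖G i₀ j₀‖ < 1)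
    (hne : z i₀ ≠ z j₀) :
    ∑ i, ∑ j, ‖x i - x j‖ < ∑ i, ∑ j, ‖z i - z j‖ := by
  have hrow_inner : ∀ i, ⟪∑ j, G i j, x i⟫_ℝ = ⟪∑ j, G i j, z i⟫_ℝ := fun i => by
    obtain ⟨μ, hμ⟩ := hrow i
    rw [hμ, real_inner_smul_left, real_inner_smul_left, hz]
  calc ∑ i, ∑ j, ‖x i - x j‖ = ∑ i, ∑ j, ⟪G i j, z i - z j⟫_ℝ := by
        simp only [← hx, sum_sum_inner_sub_of_antisymm hanti, hrow_inner]
    _ < ∑ i, ∑ j, ‖z i - z j‖ := by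
        have hle i j : ⟪G i j, z i - z j⟫_ℝ ≤ ‖z i - z j‖ :=
          real_inner_le_norm_of_norm_le_one (hnorm i j) _
        exact sum_lt_sum (fun i _ => sum_le_sum fun j _ => hle i j)
          ⟨i₀, mem_univ _, sum_lt_sum (fun j _ => hle i₀ j)
            ⟨j₀, mem_univ _, real_inner_lt_norm_of_norm_lt_one hlt (sub_ne_zero.mpr hne)⟩⟩

end DualCertificate

section Projection

variable {E : Type*} [NormedAddCommGroup E] [InnerProductSpace ℝ E]

theorem ne_zero_of_real_inner_ne_zero_left {v a : E} (h : ⟪v, a⟫_ℝ ≠ 0) : v ≠ 0 := by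
  rintro rfl
  exact h (inner_zero_left a)

theorem div_smul_eq_add_div_smul_sub {v a : E} (hc : ⟪v, a⟫_ℝ ≠ 0) :
    (‖v‖ ^ 2 / ⟪v, a⟫_ℝ) • a
      = v + (‖v‖ ^ 2 / ⟪v, a⟫_ℝ) • (a - (⟪v, a⟫_ℝ / ‖v‖ ^ 2) • v) := by
  have hv : ‖v‖ ≠ 0 := norm_ne_zero_iff.mpr (ne_zero_of_real_inner_ne_zero_left hc)
  rw [smul_sub, smul_smul, div_mul_div_cancel₀ (by positivity), div_self (by positivity),
    one_smul, add_sub_cancel]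

theorem div_smul_eq_norm_smul_sign_smul (v a w : E) :
    (‖v‖ ^ 2 / ⟪v, a⟫_ℝ) • w
      = ‖v‖ • Real.sign ⟪v, a⟫_ℝ • ‖(⟪v, a⟫_ℝ / ‖v‖ ^ 2) • v‖⁻¹ • w := by
  simp only [smul_smul, norm_smul, Real.norm_eq_abs, abs_div, abs_of_nonneg (sq_nonneg ‖v‖)]
  congr 1
  rcases eq_or_ne ‖v‖ 0 with hv | hv
  · simp [hv]
  rcases lt_trichotomy ⟪v, a⟫_ℝ 0 with hc | hc | hc
  · rw [Real.sign_of_neg hc, abs_of_neg hc]; field_simp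
  · simp [hc]
  · rw [Real.sign_of_pos hc, abs_of_pos hc]; field_simp

theorem norm_div_smul {v a : E} (hc : ⟪v, a⟫_ℝ ≠ 0) (w : E) :
    ‖(‖v‖ ^ 2 / ⟪v, a⟫_ℝ) • w‖ = ‖v‖ * (‖w‖ / ‖(⟪v, a⟫_ℝ / ‖v‖ ^ 2) • v‖) := by
  have hv : ‖v‖ ≠ 0 := norm_ne_zero_iff.mpr (ne_zero_of_real_inner_ne_zero_left hc)
  have hc' : |⟪v, a⟫_ℝ| ≠ 0 := abs_ne_zero.mpr hc
  simp only [norm_smul, Real.norm_eq_abs, abs_div, abs_of_nonneg (sq_nonneg ‖v‖)]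
  field_simp

theorem exists_inner_ne_zero_of_span_eq_top {s : Set E} (hs : Submodule.span ℝ s = ⊤) {x : E}
    (hx : x ≠ 0) : ∃ y ∈ s, ⟪y, x⟫_ℝ ≠ 0 := by
  by_contra! h
  have hortho : Submodule.span ℝ s ⟂ Submodule.span ℝ {x} :=
    Submodule.isOrtho_span.mpr fun u hu w hw => Set.mem_singleton_iff.mp hw ▸ h u hu
  rw [hs, Submodule.isOrtho_top_left, Submodule.span_singleton_eq_bot] at hortho
  exact hx hortho

end Projection

section Clustering

variable {E ι κ : Type*} [NormedAddCommGroup E] [InnerProductSpace ℝ E]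

noncomputable def unitDir (x y : E) : E := ‖x - y‖⁻¹ • (x - y)

theorem norm_unitDir_le (x y : E) : ‖unitDir x y‖ ≤ 1 := by
  rw [unitDir, norm_smul, norm_inv, norm_norm]
  exact inv_mul_le_one_of_le₀ le_rfl (norm_nonneg _)

theorem inner_unitDir (x y : E) : ⟪unitDir x y, x - y⟫_ℝ = ‖x - y‖ := by
  rw [unitDir, real_inner_smul_left, real_inner_self_eq_norm_sq]
  rcases eq_or_ne ‖x - y‖ 0 with h | h
  · simp [h]
  · field_simp

theorem unitDir_swap (x y : E) : unitDir y x = -unitDir x y := by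
  rw [unitDir, unitDir, norm_sub_rev, ← smul_neg, neg_sub]

theorem exists_eq_ne_of_span_eq_top {ℓ : ι → κ} {β : κ → E} {a : ι → E}
    (hspan : ∀ p, Submodule.span ℝ {x | ∃ i, ℓ i = p ∧ a i = x} = ⊤) {z : ι → E}
    (hz : ∀ i, ⟪a i, z i⟫_ℝ = ⟪a i, β (ℓ i)⟫_ℝ) (hne : z ≠ fun i => β (ℓ i)) :
    ∃ i j, ℓ i = ℓ j ∧ z i ≠ z j := by
  obtain ⟨i, hi⟩ := Function.ne_iff.mp hne
  obtain ⟨_, ⟨j, hj, rfl⟩, hij⟩ :=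
    exists_inner_ne_zero_of_span_eq_top (hspan (ℓ i)) (sub_ne_zero.mpr hi)
  refine ⟨i, j, hj.symm, fun h => hij ?_⟩
  rw [h, ← hj, inner_sub_right, hz, sub_self]

variable [Fintype ι] [DecidableEq κ]

def classSize (ℓ : ι → κ) (p : κ) : ℕ := #{i | ℓ i = p}

theorem classSize_ne_zero (ℓ : ι → κ) (i : ι) : classSize ℓ (ℓ i) ≠ 0 :=
  card_ne_zero_of_mem (mem_filter.mpr ⟨mem_univ i, rfl⟩ : i ∈ ({j | ℓ j = ℓ i} : Finset ι))

noncomputable def clusterCertificate (ℓ : ι → κ) (β : κ → E) (y : ι → E) (i j : ι) : E :=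
  if ℓ i = ℓ j then (2 * classSize ℓ (ℓ i) : ℝ)⁻¹ • (y i - y j)
  else unitDir (β (ℓ i)) (β (ℓ j))

theorem certificate_swap (ℓ : ι → κ) (β : κ → E) (y : ι → E) (i j : ι) :
    clusterCertificate ℓ β y j i = -clusterCertificate ℓ β y i j := by
  unfold clusterCertificate
  by_cases h : ℓ i = ℓ j
  · rw [if_pos h.symm, if_pos h, h, ← smul_neg, neg_sub]
  · rw [if_neg (Ne.symm h), if_neg h, unitDir_swap]

theorem inner_certificate (ℓ : ι → κ) (β : κ → E) (y : ι → E) (i j : ι) :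
    ⟪clusterCertificate ℓ β y i j, β (ℓ i) - β (ℓ j)⟫_ℝ = ‖β (ℓ i) - β (ℓ j)‖ := by
  unfold clusterCertificate
  by_cases h : ℓ i = ℓ j
  · simp [h]
  · rw [if_neg h, inner_unitDir]

variable [Fintype κ]

noncomputable def weightedDirSum (ℓ : ι → κ) (β : κ → E) (p : κ) : E :=
  ∑ q ∈ univ.erase p, (classSize ℓ q : ℝ) • unitDir (β p) (β q)

theorem norm_weightedDirSum_le (ℓ : ι → κ) (β : κ → E) (p : κ) :
    ‖weightedDirSum ℓ β p‖ ≤ Fintype.card ι :=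
  calc ‖weightedDirSum ℓ β p‖
      ≤ ∑ q ∈ univ.erase p, ‖(classSize ℓ q : ℝ) • unitDir (β p) (β q)‖ := norm_sum_le _ _
    _ ≤ ∑ q ∈ univ.erase p, (classSize ℓ q : ℝ) := sum_le_sum fun q _ => by
        rw [norm_smul, Real.norm_natCast]
        exact mul_le_of_le_one_right (Nat.cast_nonneg _) (norm_unitDir_le _ _)
    _ ≤ Fintype.card ι := by
        rw [← Nat.cast_sum, Nat.cast_le]
        exact (sum_card_fiberwise_eq_card_filter univ (univ.erase p) ℓ).trans_le
          (card_filter_le _ _)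

variable {ℓ : ι → κ} {β : κ → E} {y : ι → E}

theorem norm_certificate_lt_one
    (hdev : ∀ i, ‖y i - (2 : ℝ) • weightedDirSum ℓ β (ℓ i)‖ < classSize ℓ (ℓ i))
    {i j : ι} (h : ℓ i = ℓ j) : ‖clusterCertificate ℓ β y i j‖ < 1 := by
  have hdev_j := hdev j
  rw [← h] at hdev_j
  have hlt : ‖y i - y j‖ < 2 * classSize ℓ (ℓ i) :=
    calc ‖y i - y j‖ = ‖(y i - (2 : ℝ) • weightedDirSum ℓ β (ℓ i))
          - (y j - (2 : ℝ) • weightedDirSum ℓ β (ℓ i))‖ := by rw [sub_sub_sub_cancel_right]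
      _ ≤ _ := norm_sub_le _ _
      _ < _ := by linarith [hdev i]
  rw [clusterCertificate, if_pos h, norm_smul, norm_inv, Real.norm_of_nonneg (by positivity)]
  exact (inv_mul_lt_one₀ ((norm_nonneg _).trans_lt hlt)).mpr hlt

theorem norm_certificate_le_one
    (hdev : ∀ i, ‖y i - (2 : ℝ) • weightedDirSum ℓ β (ℓ i)‖ < classSize ℓ (ℓ i)) (i j : ι) :
    ‖clusterCertificate ℓ β y i j‖ ≤ 1 := by
  by_cases h : ℓ i = ℓ j
  · exact (norm_certificate_lt_one hdev h).le
  · rw [clusterCertificate, if_neg h]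
    exact norm_unitDir_le _ _

theorem sum_certificate
    (hsum : ∀ i, ∑ j with ℓ j = ℓ i, y j = (2 * classSize ℓ (ℓ i) : ℝ) • weightedDirSum ℓ β (ℓ i))
    (i : ι) : ∑ j, clusterCertificate ℓ β y i j = (2 : ℝ)⁻¹ • y i := by
  have hn : (classSize ℓ (ℓ i) : ℝ) ≠ 0 := Nat.cast_ne_zero.mpr (classSize_ne_zero ℓ i)
  have hsame : ∑ j with ℓ j = ℓ i, clusterCertificate ℓ β y i j
      = (2 : ℝ)⁻¹ • y i - weightedDirSum ℓ β (ℓ i) := by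
    rw [sum_congr rfl fun j hj => by rw [clusterCertificate, if_pos (mem_filter.mp hj).2.symm],
      ← smul_sum, sum_sub_distrib, hsum i, sum_const]
    change (2 * (classSize ℓ (ℓ i) : ℝ))⁻¹ • (classSize ℓ (ℓ i) • y i - _) = _
    rw [← Nat.cast_smul_eq_nsmul ℝ]
    match_scalars <;> field_simp
  have hother : ∀ q ∈ univ.erase (ℓ i), ∑ j with ℓ j = q, clusterCertificate ℓ β y i j
      = (classSize ℓ q : ℝ) • unitDir (β (ℓ i)) (β q) := fun q hq => by
    rw [sum_congr rfl fun j hj => by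
      rw [clusterCertificate, (mem_filter.mp hj).2, if_neg (ne_of_mem_erase hq).symm],
      sum_const, ← Nat.cast_smul_eq_nsmul ℝ]
    rfl
  rw [← sum_fiberwise univ ℓ, ← add_sum_erase _ _ (mem_univ (ℓ i)), hsame,
    sum_congr rfl hother]
  exact sub_add_cancel _ _

variable {a : ι → E} {v : κ → E}

noncomputable def dualWeight (ℓ : ι → κ) (a : ι → E) (v : κ → E) (i : ι) : ℝ :=
  2 * (∑ q ∈ univ.erase (ℓ i), (classSize ℓ q : ℝ)) * (‖v (ℓ i)‖ ^ 2 / ⟪v (ℓ i), a i⟫_ℝ)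

theorem smul_eq_weightedDirSum {p : κ}
    (hv : v p = (∑ q ∈ univ.erase p, (classSize ℓ q : ℝ))⁻¹ • weightedDirSum ℓ β p)
    (hvp : v p ≠ 0) : (∑ q ∈ univ.erase p, (classSize ℓ q : ℝ)) • v p = weightedDirSum ℓ β p := by
  have hN : ∑ q ∈ univ.erase p, (classSize ℓ q : ℝ) ≠ 0 := fun h =>
    hvp (by rw [hv, h, inv_zero, zero_smul])
  rw [hv, smul_smul, mul_inv_cancel₀ hN, one_smul]

theorem dualWeight_smul_eq
    (hv : ∀ p, v p = (∑ q ∈ univ.erase p, (classSize ℓ q : ℝ))⁻¹ • weightedDirSum ℓ β p)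
    (hva : ∀ i, ⟪v (ℓ i), a i⟫_ℝ ≠ 0) (i : ι) :
    dualWeight ℓ a v i • a i = (2 : ℝ) • weightedDirSum ℓ β (ℓ i)
      + (2 * ∑ q ∈ univ.erase (ℓ i), (classSize ℓ q : ℝ)) • (‖v (ℓ i)‖ ^ 2 / ⟪v (ℓ i), a i⟫_ℝ) •
        (a i - (⟪v (ℓ i), a i⟫_ℝ / ‖v (ℓ i)‖ ^ 2) • v (ℓ i)) := by
  rw [dualWeight, mul_smul, div_smul_eq_add_div_smul_sub (hva i), smul_add, mul_smul,
    smul_eq_weightedDirSum (hv _) (ne_zero_of_real_inner_ne_zero_left (hva i))]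

theorem sum_dualWeight_smul
    (hv : ∀ p, v p = (∑ q ∈ univ.erase p, (classSize ℓ q : ℝ))⁻¹ • weightedDirSum ℓ β p)
    (hva : ∀ i, ⟪v (ℓ i), a i⟫_ℝ ≠ 0)
    (hbal : ∀ p, ∑ i with ℓ i = p, Real.sign ⟪v p, a i⟫_ℝ •
      ‖(⟪v p, a i⟫_ℝ / ‖v p‖ ^ 2) • v p‖⁻¹ • (a i - (⟪v p, a i⟫_ℝ / ‖v p‖ ^ 2) • v p) = 0)
    (i : ι) : ∑ j with ℓ j = ℓ i, dualWeight ℓ a v j • a j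
      = (2 * classSize ℓ (ℓ i) : ℝ) • weightedDirSum ℓ β (ℓ i) := by
  rw [sum_congr rfl fun j hj => by rw [dualWeight_smul_eq hv hva j, (mem_filter.mp hj).2],
    sum_add_distrib, sum_const, ← smul_sum]
  simp_rw [div_smul_eq_norm_smul_sign_smul]
  rw [← smul_sum, hbal, smul_zero, smul_zero, add_zero]
  change classSize ℓ (ℓ i) • _ = _
  rw [← Nat.cast_smul_eq_nsmul ℝ, smul_smul, mul_comm]

theorem norm_dualWeight_smul_sub_lt
    (hv : ∀ p, v p = (∑ q ∈ univ.erase p, (classSize ℓ q : ℝ))⁻¹ • weightedDirSum ℓ β p)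
    (hva : ∀ i, ⟪v (ℓ i), a i⟫_ℝ ≠ 0)
    (hsep : ∀ i, ‖a i - (⟪v (ℓ i), a i⟫_ℝ / ‖v (ℓ i)‖ ^ 2) • v (ℓ i)‖ /
      ‖(⟪v (ℓ i), a i⟫_ℝ / ‖v (ℓ i)‖ ^ 2) • v (ℓ i)‖ <
        1 / 2 * ((classSize ℓ (ℓ i) : ℝ) / Fintype.card ι))
    (i : ι) :
    ‖dualWeight ℓ a v i • a i - (2 : ℝ) • weightedDirSum ℓ β (ℓ i)‖ < classSize ℓ (ℓ i) := by
  have hw : ‖(2 * ∑ q ∈ univ.erase (ℓ i), (classSize ℓ q : ℝ))‖ * ‖v (ℓ i)‖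
      = 2 * ‖weightedDirSum ℓ β (ℓ i)‖ := by
    rw [← smul_eq_weightedDirSum (hv _) (ne_zero_of_real_inner_ne_zero_left (hva i)), norm_mul,
      norm_smul, Real.norm_two, mul_assoc]
  have hcard : (0 : ℝ) < Fintype.card ι := Nat.cast_pos.mpr (Fintype.card_pos_iff.mpr ⟨i⟩)
  rw [dualWeight_smul_eq hv hva, add_sub_cancel_left, norm_smul, norm_div_smul (hva i),
    ← mul_assoc, hw]
  calc 2 * ‖weightedDirSum ℓ β (ℓ i)‖ * _ ≤ 2 * Fintype.card ι * _ := by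
        gcongr
        exact norm_weightedDirSum_le ℓ β (ℓ i)
    _ < 2 * Fintype.card ι * (1 / 2 * ((classSize ℓ (ℓ i) : ℝ) / Fintype.card ι)) := by
        gcongr
        exact hsep i
    _ = classSize ℓ (ℓ i) := by field_simp

end Clustering

theorem stmt_13_general {d k m : ℕ}
    (β : Fin k → EuclideanSpace ℝ (Fin d))
    (ℓ : Fin m → Fin k)
    (n : Fin k → ℕ) (hn : ∀ p, n p = (Finset.univ.filter fun i => ℓ i = p).card)
    (a : Fin m → EuclideanSpace ℝ (Fin d)) (b : Fin m → ℝ)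
    (hb : ∀ i, b i = ⟪a i, β (ℓ i)⟫_ℝ)
    (v : Fin k → EuclideanSpace ℝ (Fin d))
    (hv : ∀ p, v p = (∑ q ∈ Finset.univ.erase p, (n q : ℝ))⁻¹ •
      ∑ q ∈ Finset.univ.erase p, (n q : ℝ) • (‖β p - β q‖⁻¹ • (β p - β q)))
    (hva : ∀ i, ⟪v (ℓ i), a i⟫_ℝ ≠ 0)
    (hsep : ∀ i, ∀ p : Fin k,
      ‖a i - (⟪v (ℓ i), a i⟫_ℝ / ‖v (ℓ i)‖ ^ 2) • v (ℓ i)‖ /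
          ‖(⟪v (ℓ i), a i⟫_ℝ / ‖v (ℓ i)‖ ^ 2) • v (ℓ i)‖ <
        (1 / 2) * ((n p : ℝ) / m))
    (hbal : ∀ p : Fin k,
      ∑ i ∈ Finset.univ.filter fun i => ℓ i = p,
        Real.sign ⟪v p, a i⟫_ℝ •
          (‖(⟪v p, a i⟫_ℝ / ‖v p‖ ^ 2) • v p‖⁻¹ •
            (a i - (⟪v p, a i⟫_ℝ / ‖v p‖ ^ 2) • v p)) = 0)
    (hspan : ∀ p : Fin k,
      Submodule.span ℝ {x | ∃ i, ℓ i = p ∧ a i = x} = ⊤) :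
    ∀ z : Fin m → EuclideanSpace ℝ (Fin d),
      (∀ i, ⟪a i, z i⟫_ℝ = b i) → z ≠ (fun i => β (ℓ i)) →
        ∑ i : Fin m, ∑ j : Fin m, ‖β (ℓ i) - β (ℓ j)‖ <
          ∑ i : Fin m, ∑ j : Fin m, ‖z i - z j‖ := by
  obtain rfl : n = classSize ℓ := funext hn
  intro z hz hne
  have hz' : ∀ i, ⟪a i, z i⟫_ℝ = ⟪a i, β (ℓ i)⟫_ℝ := fun i => (hz i).trans (hb i)
  have hdev := norm_dualWeight_smul_sub_lt hv hva fun i => by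
    rw [Fintype.card_fin]
    exact hsep i (ℓ i)
  obtain ⟨i₀, j₀, hij, hz₀⟩ := exists_eq_ne_of_span_eq_top hspan hz' hne
  have hrow i := (sum_certificate (sum_dualWeight_smul hv hva hbal) i).trans (smul_smul _ _ _)
  exact sum_norm_sub_lt_of_dualCertificate (certificate_swap ℓ β _) (norm_certificate_le_one hdev)
    (inner_certificate ℓ β _) (fun i => ⟨_, hrow i⟩) hz'
    (norm_certificate_lt_one hdev hij) hz₀

theorem stmt_13 {d k m : ℕ}
    (β : Fin k → EuclideanSpace ℝ (Fin d)) (hβ : Function.Injective β)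
    (ℓ : Fin m → Fin k)
    (n : Fin k → ℕ) (hn : ∀ p, n p = (Finset.univ.filter fun i => ℓ i = p).card)
    (a : Fin m → EuclideanSpace ℝ (Fin d)) (b : Fin m → ℝ)
    (hb : ∀ i, b i = ⟪a i, β (ℓ i)⟫_ℝ)
    (v : Fin k → EuclideanSpace ℝ (Fin d))
    (hv : ∀ p, v p = (∑ q ∈ Finset.univ.erase p, (n q : ℝ))⁻¹ •
      ∑ q ∈ Finset.univ.erase p, (n q : ℝ) • (‖β p - β q‖⁻¹ • (β p - β q)))
    (hvne : ∀ p, v p ≠ 0)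
    (hva : ∀ i, ⟪v (ℓ i), a i⟫_ℝ ≠ 0)
    (hsep : ∀ i, ∀ p : Fin k,
      ‖a i - (⟪v (ℓ i), a i⟫_ℝ / ‖v (ℓ i)‖ ^ 2) • v (ℓ i)‖ /
          ‖(⟪v (ℓ i), a i⟫_ℝ / ‖v (ℓ i)‖ ^ 2) • v (ℓ i)‖ <
        (1 / 2) * ((n p : ℝ) / m))
    (hbal : ∀ p : Fin k,
      ∑ i ∈ Finset.univ.filter fun i => ℓ i = p,
        Real.sign ⟪v p, a i⟫_ℝ •
          (‖(⟪v p, a i⟫_ℝ / ‖v p‖ ^ 2) • v p‖⁻¹ •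
            (a i - (⟪v p, a i⟫_ℝ / ‖v p‖ ^ 2) • v p)) = 0)
    (hspan : ∀ p : Fin k,
      Submodule.span ℝ {x | ∃ i, ℓ i = p ∧ a i = x} = ⊤) :
    ∀ z : Fin m → EuclideanSpace ℝ (Fin d),
      (∀ i, ⟪a i, z i⟫_ℝ = b i) → z ≠ (fun i => β (ℓ i)) →
        ∑ i : Fin m, ∑ j : Fin m, ‖β (ℓ i) - β (ℓ j)‖ <
          ∑ i : Fin m, ∑ j : Fin m, ‖z i - z j‖ :=
  stmt_13_general β ℓ n hn a b hb v hv hva hsep hbal hspan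
end
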